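/- The even linear map Υ̃_{0,0} : osp(2|2) → D²_{0,0} defined by Υ̃_{0,0}(X_G) : F ↦ η̄_1η̄_2(G)·F (multiplication by η̄_1(η̄_2(G))) is a 1-cocycle: Υ̃_{0,0}([X_F, X_G]) = X_F·Υ̃_{0,0}(X_G) − (−1)^{|F||G|} X_G·Υ̃_{0,0}(X_F) for all homogeneous X_F, X_G ∈ osp(2|2); moreover it is not a coboundary. -/

import Mathlib

noncomputable section
open Function
open scoped ContDiff

def SmoothFn : Subalgebra ℝ (ℝ → ℝ) where
  carrier := {f | ContDiff ℝ ∞ f}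
  mul_mem' := fun {a b} (hf : ContDiff ℝ ∞ a) (hg : ContDiff ℝ ∞ b) => hf.mul hg
  add_mem' := fun {a b} (hf : ContDiff ℝ ∞ a) (hg : ContDiff ℝ ∞ b) => hf.add hg
  algebraMap_mem' := fun c => (contDiff_const : ContDiff ℝ ∞ (fun _ : ℝ => c))

abbrev SF : Type := SmoothFn

theorem mem_SmoothFn {f : ℝ → ℝ} : f ∈ SmoothFn ↔ ContDiff ℝ ∞ f := ⟨fun h => h, fun h => h⟩

def sderiv (f : SF) : SF :=
  ⟨deriv (f : ℝ → ℝ), mem_SmoothFn.mpr (contDiff_infty_iff_deriv.mp (mem_SmoothFn.mp f.2)).2⟩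

def cx : SF := ⟨id, mem_SmoothFn.mpr contDiff_id⟩

/-- `C^∞(ℝ^{1|2})`: a superfunction `f₀ + f₁θ₁ + f₂θ₂ + f₁₂θ₁θ₂` is recorded by its four
smooth coefficients, indexed by `0 ↦ f₀`, `1 ↦ f₁`, `2 ↦ f₂`, `3 ↦ f₁₂`. -/
def S2 : Type := Fin 4 → SF

instance : AddCommGroup S2 := inferInstanceAs (AddCommGroup (Fin 4 → SF))
instance : Module ℝ S2 := inferInstanceAs (Module ℝ (Fin 4 → SF))

namespace S2

@[simp] theorem add_apply (F G : S2) (i : Fin 4) : (F + G) i = F i + G i := rfl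
@[simp] theorem sub_apply (F G : S2) (i : Fin 4) : (F - G) i = F i - G i := rfl
@[simp] theorem smul_apply (c : ℝ) (F : S2) (i : Fin 4) : (c • F) i = c • F i := rfl
@[simp] theorem zero_apply (i : Fin 4) : (0 : S2) i = 0 := rfl

/-- Supercommutative multiplication on `C^∞(ℝ^{1|2})`. -/
def mul (F G : S2) : S2 :=
  ![F 0 * G 0,
    F 0 * G 1 + F 1 * G 0,
    F 0 * G 2 + F 2 * G 0,
    F 0 * G 3 + F 3 * G 0 + F 1 * G 2 - F 2 * G 1]

/-- The odd coordinate `θ₁`. -/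
def θ1 : S2 := ![0, 1, 0, 0]
/-- The odd coordinate `θ₂`. -/
def θ2 : S2 := ![0, 0, 1, 0]
/-- The constant superfunction `1`. -/
def one2 : S2 := ![1, 0, 0, 0]
/-- The superfunction `x`. -/
def fx : S2 := ![cx, 0, 0, 0]
/-- The superfunction `x²`. -/
def fx2 : S2 := ![cx * cx, 0, 0, 0]
/-- The superfunction `xθ₁`. -/
def fxθ1 : S2 := ![0, cx, 0, 0]
/-- The superfunction `xθ₂`. -/
def fxθ2 : S2 := ![0, 0, cx, 0]
/-- The superfunction `θ₁θ₂`. -/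
def fθ12 : S2 := ![0, 0, 0, 1]

/-- The even derivative `∂ₓ`. -/
def dx (F : S2) : S2 := fun i => sderiv (F i)
/-- The odd (left) partial derivative `∂₁ = ∂/∂θ₁`. -/
def d1 (F : S2) : S2 := ![F 1, 0, F 3, 0]
/-- The odd (left) partial derivative `∂₂ = ∂/∂θ₂`. -/
def d2 (F : S2) : S2 := ![F 2, -F 3, 0, 0]
/-- The odd vector field `η̄₁ = ∂₁ − θ₁∂ₓ`. -/
def eta1 (F : S2) : S2 := d1 F - mul θ1 (dx F)
/-- The odd vector field `η̄₂ = ∂₂ − θ₂∂ₓ`. -/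
def eta2 (F : S2) : S2 := d2 F - mul θ2 (dx F)

/-- The even part `f₀ + f₁₂θ₁θ₂` of a superfunction. -/
def evenPart (F : S2) : S2 := ![F 0, 0, 0, F 3]
/-- The odd part `f₁θ₁ + f₂θ₂` of a superfunction. -/
def oddPart (F : S2) : S2 := ![0, F 1, F 2, 0]

/-- `F` is even (parity `0̄`). -/
def IsEven (F : S2) : Prop := F 1 = 0 ∧ F 2 = 0
/-- `F` is odd (parity `1̄`). -/
def IsOdd (F : S2) : Prop := F 0 = 0 ∧ F 3 = 0
/-- `F` is homogeneous of parity `p` (`false` = even, `true` = odd). -/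
def HasParity (F : S2) (p : Bool) : Prop := if p then IsOdd F else IsEven F

/-- The sign `(−1)^p`. -/
def sgn (p : Bool) : ℝ := if p then -1 else 1

/-- The contact vector field `X_F` applied to `G`; for homogeneous `F` this is
`F∂ₓ(G) − ½(−1)^{|F|}(η̄₁(F)η̄₁(G) + η̄₂(F)η̄₂(G))`, extended linearly in `F`. -/
def X (F G : S2) : S2 :=
  mul F (dx G)
    - (1 / 2 : ℝ) • (mul (eta1 (evenPart F)) (eta1 G) + mul (eta2 (evenPart F)) (eta2 G))
    + (1 / 2 : ℝ) • (mul (eta1 (oddPart F)) (eta1 G) + mul (eta2 (oddPart F)) (eta2 G))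

/-- The contact bracket `{F,G} = FG' − F'G − ½(−1)^{|F|}(η̄₁(F)η̄₁(G) + η̄₂(F)η̄₂(G))`
(for homogeneous `F`, extended linearly), so `[X_F, X_G] = X_{{F,G}}`. -/
def cbr (F G : S2) : S2 := X F G - mul (dx F) G

/-- The action `L^λ_{X_H}(G) = X_H(G) + λ H' G` of `X_H` on `λ`-densities `F²_λ`. -/
def Lact (lam : ℝ) (H G : S2) : S2 := X H G + lam • mul (dx H) G

/-- `osp(2|2)`, realized as the span of the contact Hamiltonians
`1, x, x², xθ₁, xθ₂, θ₁, θ₂, θ₁θ₂` (identifying `X_F ↔ F`). -/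
def osp22 : Submodule ℝ S2 :=
  Submodule.span ℝ {one2, fx, fx2, fxθ1, fxθ2, θ1, θ2, fθ12}

/-- `osp(1|2) ⊂ osp(2|2)`: the span of `1, x, x², xθ₁, θ₁`. -/
def osp12 : Submodule ℝ S2 :=
  Submodule.span ℝ {one2, fx, fx2, fxθ1, θ1}

/-- A linear differential operator `F²_λ → F²_μ`:
`A(F) = Σ_{ℓ,m} a_{ℓ,m} η̄₁^ℓ η̄₂^m (F)` with smooth coefficients. -/
def IsDiffOp (A : S2 → S2) : Prop :=
  ∃ (N : ℕ) (a : Fin (N + 1) → Fin (N + 1) → S2),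
    ∀ F, A F = ∑ l : Fin (N + 1), ∑ m : Fin (N + 1),
      mul (a l m) (eta1^[(l : ℕ)] (eta2^[(m : ℕ)] F))

/-- The action of `X_H` (`H` homogeneous of parity `pH`) on a homogeneous operator `A`
of parity `pA`: `X_H·A = L^μ_{X_H} ∘ A − (−1)^{|H||A|} A ∘ L^λ_{X_H}`. -/
def opAct (lam mu : ℝ) (pH pA : Bool) (H : S2) (A : S2 → S2) : S2 → S2 :=
  fun F => Lact mu H (A F) - sgn (pH && pA) • A (Lact lam H F)

/-- An operator is homogeneous of parity `p` if it shifts the parity of homogeneous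
superfunctions by `p`. -/
def OpParity (A : S2 → S2) (p : Bool) : Prop :=
  ∀ (F : S2) (q : Bool), HasParity F q → HasParity (A F) (xor p q)


/-- A `1`-cochain of `osp(2|2)` with values in `D²_{λ,μ}`, recorded as a map defined on all
contact Hamiltonians; it represents a cochain through its restriction to `osp22`,
`Υ(X_G) = U G`. -/
abbrev Cochain := S2 → (S2 → S2)

/-- A cochain takes values in differential operators (on `osp(2|2)`). -/
def DiffValued (U : Cochain) : Prop := ∀ F ∈ osp22, IsDiffOp (U F)

/-- The `1`-cocycle condition for a homogeneous cochain `U` of parity `pU`: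
`Υ([X_F,X_G]) = (−1)^{|F||Υ|} X_F·Υ(X_G) − (−1)^{|G|(|F|+|Υ|)} X_G·Υ(X_F)`
for all homogeneous `X_F, X_G ∈ osp(2|2)`. -/
def IsCocycle (lam mu : ℝ) (pU : Bool) (U : Cochain) : Prop :=
  ∀ F G : S2, F ∈ osp22 → G ∈ osp22 →
    ∀ pF pG : Bool, HasParity F pF → HasParity G pG →
      U (cbr F G) =
        sgn (pF && pU) • opAct lam mu pF (xor pU pG) F (U G)
          - sgn (pG && xor pF pU) • opAct lam mu pG (xor pU pF) G (U F)

/-- `U` is a coboundary of parity `pU`: there is `A ∈ D²_{λ,μ}` of parity `pU` with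
`Υ(X_F) = (−1)^{|F||A|} X_F·A` for all `X_F ∈ osp(2|2)`. -/
def IsCoboundary (lam mu : ℝ) (pU : Bool) (U : Cochain) : Prop :=
  ∃ A : S2 → S2, IsDiffOp A ∧ OpParity A pU ∧
    ∀ F ∈ osp22, ∀ pF : Bool, HasParity F pF →
      U F = sgn (pF && pU) • opAct lam mu pF pU F A

/-- `U` is a coboundary (of some homogeneous `A ∈ D²_{λ,μ}`). -/
def IsCoboundaryAny (lam mu : ℝ) (U : Cochain) : Prop :=
  ∃ pU : Bool, IsCoboundary lam mu pU U

/-- An `osp(1|2)`-relative `1`-cocycle: a `1`-cocycle vanishing on `osp(1|2)`. -/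
def IsRelCocycle (lam mu : ℝ) (pU : Bool) (U : Cochain) : Prop :=
  IsCocycle lam mu pU U ∧ ∀ F ∈ osp12, U F = 0

/-- `A ∈ D²_{λ,μ}` (of parity `pA`) is `osp(1|2)`-invariant: `X_H·A = 0` for all
`X_H ∈ osp(1|2)`. -/
def IsInvariantOp (lam mu : ℝ) (pA : Bool) (A : S2 → S2) : Prop :=
  ∀ H ∈ osp12, ∀ pH : Bool, HasParity H pH → opAct lam mu pH pA H A = 0

/-- `U` is an `osp(1|2)`-relative coboundary of parity `pU`: `Υ = δA` with `A` an
`osp(1|2)`-invariant homogeneous element of `D²_{λ,μ}`. -/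
def IsRelCoboundary (lam mu : ℝ) (pU : Bool) (U : Cochain) : Prop :=
  ∃ A : S2 → S2, IsDiffOp A ∧ OpParity A pU ∧ IsInvariantOp lam mu pU A ∧
    ∀ F ∈ osp22, ∀ pF : Bool, HasParity F pF →
      U F = sgn (pF && pU) • opAct lam mu pF pU F A

/-- `U` is a relative coboundary (of some homogeneous invariant `A`). -/
def IsRelCoboundaryAny (lam mu : ℝ) (U : Cochain) : Prop :=
  ∃ pU : Bool, IsRelCoboundary lam mu pU U

/-! ### The explicit nontrivial cocycles -/

/-- `Υ_{λ,λ}(X_G) : F ↦ G′·F`. -/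
def U1 : Cochain := fun G F => mul (dx G) F

/-- `Υ̃_{0,0}(X_G) : F ↦ η̄₁η̄₂(G)·F`. -/
def Ut0 : Cochain := fun G F => mul (eta1 (eta2 G)) F

/-- `Υ̃_{λ,λ}(X_G) : F ↦ 2λ η̄₁(∂₂G)·F − (−1)^{|G|}(∂₂(G)·η̄₁(F) + θ₂·η̄₂η̄₁(G)·η̄₂(F))`
(for `λ ≠ 0`), the sign `(−1)^{|G|}` being realized by the even/odd splitting of `G`. -/
def Ut (lam : ℝ) : Cochain := fun G F =>
  (2 * lam) • mul (eta1 (d2 G)) F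
    - (mul (d2 (evenPart G)) (eta1 F) + mul (mul θ2 (eta2 (eta1 (evenPart G)))) (eta2 F))
    + (mul (d2 (oddPart G)) (eta1 F) + mul (mul θ2 (eta2 (eta1 (oddPart G)))) (eta2 F))

/-- `Υ̃_{λ,λ}` for general `λ` (with the special value at `λ = 0`). -/
def Ut' (lam : ℝ) : Cochain := if lam = 0 then Ut0 else Ut lam

/-- `Υ_{−k/2,k/2}(X_G) : F ↦ G′·η̄₁η̄₂^{2k−1}(F)`. -/
def Uk (k : ℕ) : Cochain := fun G F => mul (dx G) (eta1 (eta2^[2 * k - 1] F))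

/-- `Υ̃_{−k/2,k/2}(X_G) :
F ↦ k η̄₁(∂₂G)·η̄₁η̄₂^{2k−1}(F) − (−1)^{|G|}(∂₂(G)·η̄₂^{2k+1}(F) − η̄₁(θ₂∂₂(G))·η̄₁^{2k+1}(F))`. -/
def Utk (k : ℕ) : Cochain := fun G F =>
  (k : ℝ) • mul (eta1 (d2 G)) (eta1 (eta2^[2 * k - 1] F))
    - (mul (d2 (evenPart G)) (eta2^[2 * k + 1] F)
        - mul (eta1 (mul θ2 (d2 (evenPart G)))) (eta1^[2 * k + 1] F))
    + (mul (d2 (oddPart G)) (eta2^[2 * k + 1] F)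
        - mul (eta1 (mul θ2 (d2 (oddPart G)))) (eta1^[2 * k + 1] F))

/-- `Ῡ_{−k/2,k/2}(X_G) :
F ↦ (k−1) G″·η̄₁η̄₂^{2k−3}(F) + (−1)^{|G|}(η̄₂(G′)·η̄₁^{2k−1}(F) − η̄₁(G′)·η̄₂^{2k−1}(F))`. -/
def Ub (k : ℕ) : Cochain := fun G F =>
  ((k : ℝ) - 1) • mul (dx (dx G)) (eta1 (eta2^[2 * k - 3] F))
    + (mul (eta2 (dx (evenPart G))) (eta1^[2 * k - 1] F)
        - mul (eta1 (dx (evenPart G))) (eta2^[2 * k - 1] F))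
    - (mul (eta2 (dx (oddPart G))) (eta1^[2 * k - 1] F)
        - mul (eta1 (dx (oddPart G))) (eta2^[2 * k - 1] F))

/-! ### The action on possibly inhomogeneous operators -/

/-- The even part of an operator. -/
def opEven (A : S2 → S2) : S2 → S2 :=
  fun F => evenPart (A (evenPart F)) + oddPart (A (oddPart F))

/-- The odd part of an operator. -/
def opOdd (A : S2 → S2) : S2 → S2 :=
  fun F => oddPart (A (evenPart F)) + evenPart (A (oddPart F))

/-- The action `X_H·A` of a homogeneous `X_H` on a possibly inhomogeneous operator `A`,
extending `opAct` by linearity in `A` via its parity decomposition. -/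
def opActG (lam mu : ℝ) (pH : Bool) (H : S2) (A : S2 → S2) : S2 → S2 :=
  fun F => Lact mu H (A F)
    - (opEven A (Lact lam H F) + sgn pH • opOdd A (Lact lam H F))

/-- The coboundary `δA` of a homogeneous operator `A` of parity `pA`, as a cochain:
`δA(X_F) = (−1)^{|F||A|} X_F·A`, extended linearly in `F`. -/
def cobdMap (lam mu : ℝ) (pA : Bool) (A : S2 → S2) : Cochain := fun F =>
  opAct lam mu false pA (evenPart F) A
    + sgn pA • opAct lam mu true pA (oddPart F) A

/-- A differential operator with constant coefficients. -/
def IsConstCoeffOp (A : S2 → S2) : Prop :=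
  ∃ (N : ℕ) (a : Fin (N + 1) → Fin (N + 1) → Fin 4 → ℝ),
    ∀ F, A F = ∑ l : Fin (N + 1), ∑ m : Fin (N + 1),
      mul (fun i => algebraMap ℝ SF (a l m i)) (eta1^[(l : ℕ)] (eta2^[(m : ℕ)] F))

end S2

/-!
`Υ̃₀₀(X_G)` is the multiplication operator by `φ_G = η̄₁η̄₂(G)`. On `λ`-densities `X_F` acts by a
superderivation plus the multiplier `λF′`, so for `λ = μ` the action of `X_F` on a multiplication
operator by `φ` is multiplication by `X_F(φ)`. The cocycle condition therefore reduces to the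
identity `η̄₁η̄₂{F,G} = X_F(η̄₁η̄₂G) − (−1)^{|F||G|} X_G(η̄₁η̄₂F)`, which holds for all homogeneous
`F, G` and is checked in coordinates.

It is not a coboundary: `Υ̃₀₀(X_{θ₁θ₂}) = −id`, whereas `X_{θ₁θ₂}` kills constants and the image
of `L_{X_{θ₁θ₂}}` has no `θ`-free term, so `(X_{θ₁θ₂}·A)(1) = L_{X_{θ₁θ₂}}(A 1)` has body `0`
for every differential operator `A`.
-/

theorem SF.differentiable (f : SF) : Differentiable ℝ (f : ℝ → ℝ) :=
  (contDiff_infty_iff_deriv.mp (mem_SmoothFn.mp f.2)).1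

@[simp] theorem sderiv_coe (f : SF) : ((sderiv f : SF) : ℝ → ℝ) = deriv f := rfl

@[simp] theorem sderiv_add (a b : SF) : sderiv (a + b) = sderiv a + sderiv b :=
  Subtype.ext <| funext fun _ =>
    deriv_add a.differentiable.differentiableAt b.differentiable.differentiableAt

@[simp] theorem sderiv_sub (a b : SF) : sderiv (a - b) = sderiv a - sderiv b :=
  Subtype.ext <| funext fun _ =>
    deriv_sub a.differentiable.differentiableAt b.differentiable.differentiableAt

@[simp] theorem sderiv_neg (a : SF) : sderiv (-a) = -sderiv a :=
  Subtype.ext <| funext fun _ => deriv.neg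

@[simp] theorem sderiv_mul (a b : SF) : sderiv (a * b) = sderiv a * b + a * sderiv b :=
  Subtype.ext <| funext fun _ =>
    deriv_mul a.differentiable.differentiableAt b.differentiable.differentiableAt

@[simp] theorem sderiv_smul (c : ℝ) (a : SF) : sderiv (c • a) = c • sderiv a :=
  Subtype.ext <| funext fun _ => deriv_const_smul c a.differentiable.differentiableAt

@[simp] theorem sderiv_zero : sderiv 0 = 0 :=
  Subtype.ext <| funext fun x => deriv_const x 0

@[simp] theorem sderiv_one : sderiv 1 = 0 :=
  Subtype.ext <| funext fun x => deriv_const x 1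

namespace S2

theorem ext {F G : S2} (h0 : F 0 = G 0) (h1 : F 1 = G 1) (h2 : F 2 = G 2) (h3 : F 3 = G 3) :
    F = G := by
  funext i; fin_cases i <;> assumption

@[simp] theorem sgn_false : sgn false = 1 := rfl
@[simp] theorem sgn_true : sgn true = -1 := rfl

@[simp] theorem neg_apply (F : S2) (i : Fin 4) : (-F) i = -F i := rfl
@[simp] theorem dx_apply (F : S2) (i : Fin 4) : dx F i = sderiv (F i) := rfl

@[simp] theorem mul_apply (F G : S2) :
    mul F G 0 = F 0 * G 0 ∧ mul F G 1 = F 0 * G 1 + F 1 * G 0 ∧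
      mul F G 2 = F 0 * G 2 + F 2 * G 0 ∧
      mul F G 3 = F 0 * G 3 + F 3 * G 0 + F 1 * G 2 - F 2 * G 1 :=
  ⟨rfl, rfl, rfl, rfl⟩

@[simp] theorem evenPart_apply (F : S2) :
    evenPart F 0 = F 0 ∧ evenPart F 1 = 0 ∧ evenPart F 2 = 0 ∧ evenPart F 3 = F 3 :=
  ⟨rfl, rfl, rfl, rfl⟩

@[simp] theorem oddPart_apply (F : S2) :
    oddPart F 0 = 0 ∧ oddPart F 1 = F 1 ∧ oddPart F 2 = F 2 ∧ oddPart F 3 = 0 :=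
  ⟨rfl, rfl, rfl, rfl⟩

@[simp] theorem one2_apply : one2 0 = 1 ∧ one2 1 = 0 ∧ one2 2 = 0 ∧ one2 3 = 0 :=
  ⟨rfl, rfl, rfl, rfl⟩

@[simp] theorem fθ12_apply : fθ12 0 = 0 ∧ fθ12 1 = 0 ∧ fθ12 2 = 0 ∧ fθ12 3 = 1 :=
  ⟨rfl, rfl, rfl, rfl⟩

@[simp] theorem eta1_apply (F : S2) :
    eta1 F 0 = F 1 ∧ eta1 F 1 = -sderiv (F 0) ∧ eta1 F 2 = F 3 ∧ eta1 F 3 = -sderiv (F 2) := by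
  simp only [eta1, sub_apply]; simp [d1, mul, θ1]

@[simp] theorem eta2_apply (F : S2) :
    eta2 F 0 = F 2 ∧ eta2 F 1 = -F 3 ∧ eta2 F 2 = -sderiv (F 0) ∧ eta2 F 3 = sderiv (F 1) := by
  simp only [eta2, sub_apply]; simp [d2, mul, θ2]

protected theorem mul_zero (F : S2) : mul F 0 = 0 := by
  apply S2.ext <;> simp

protected theorem mul_add (F G H : S2) : mul F (G + H) = mul F G + mul F H := by
  apply S2.ext <;> simp <;> ring

protected theorem mul_smul (c : ℝ) (F G : S2) : mul F (c • G) = c • mul F G := by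
  apply S2.ext <;> simp [smul_add, smul_sub]

protected theorem add_mul (F G H : S2) : mul (F + G) H = mul F H + mul G H := by
  apply S2.ext <;> simp <;> ring

protected theorem sub_mul (F G H : S2) : mul (F - G) H = mul F H - mul G H := by
  apply S2.ext <;> simp <;> ring

protected theorem smul_mul (c : ℝ) (F G : S2) : mul (c • F) G = c • mul F G := by
  apply S2.ext <;> simp [smul_add, smul_sub]

theorem eta1_add (F G : S2) : eta1 (F + G) = eta1 F + eta1 G := by
  apply S2.ext <;> simp <;> abel

theorem eta2_add (F G : S2) : eta2 (F + G) = eta2 F + eta2 G := by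
  apply S2.ext <;> simp <;> abel

theorem eta1_smul (c : ℝ) (F : S2) : eta1 (c • F) = c • eta1 F := by
  apply S2.ext <;> simp

theorem eta2_smul (c : ℝ) (F : S2) : eta2 (c • F) = c • eta2 F := by
  apply S2.ext <;> simp

theorem eta1_zero : eta1 0 = 0 := by
  simpa using eta1_smul 0 0

theorem eta2_zero : eta2 0 = 0 := by
  simpa using eta2_smul 0 0

theorem hasParity_dx {F : S2} {p : Bool} (hF : HasParity F p) : HasParity (dx F) p := by
  cases p <;> obtain ⟨h₁, h₂⟩ := hF <;> simp [HasParity, IsEven, IsOdd, h₁, h₂]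

theorem hasParity_eta1 {F : S2} {p : Bool} (hF : HasParity F p) : HasParity (eta1 F) (!p) := by
  cases p <;> obtain ⟨h₁, h₂⟩ := hF <;> simp [HasParity, IsEven, IsOdd, h₁, h₂]

theorem hasParity_eta2 {F : S2} {p : Bool} (hF : HasParity F p) : HasParity (eta2 F) (!p) := by
  cases p <;> obtain ⟨h₁, h₂⟩ := hF <;> simp [HasParity, IsEven, IsOdd, h₁, h₂]

theorem hasParity_mul {F G : S2} {p q : Bool} (hF : HasParity F p) (hG : HasParity G q) :
    HasParity (mul F G) (xor p q) := by
  cases p <;> cases q <;> obtain ⟨hF₁, hF₂⟩ := hF <;> obtain ⟨hG₁, hG₂⟩ := hG <;>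
    simp [HasParity, IsEven, IsOdd, hF₁, hF₂, hG₁, hG₂]

protected theorem mul_left_comm {F G : S2} {p q : Bool} (hF : HasParity F p)
    (hG : HasParity G q) (H : S2) : mul F (mul G H) = sgn (p && q) • mul G (mul F H) := by
  cases p <;> cases q <;> obtain ⟨hF₁, hF₂⟩ := hF <;> obtain ⟨hG₁, hG₂⟩ := hG <;>
    apply S2.ext <;> simp [hF₁, hF₂, hG₁, hG₂] <;> ring

theorem X_eq_of_hasParity {F : S2} {p : Bool} (hF : HasParity F p) (G : S2) :
    X F G = mul F (dx G) -
      (1 / 2 : ℝ) • sgn p • (mul (eta1 F) (eta1 G) + mul (eta2 F) (eta2 G)) := by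
  cases p <;> obtain ⟨h₁, h₂⟩ := hF <;> apply S2.ext <;>
    simp [X, Algebra.smul_def, h₁, h₂] <;> ring

/- In the next two proofs `ring` cannot absorb the real scalar `1 / 2` acting on `SF`, so each
coordinate is compared pointwise in `ℝ`. -/
theorem X_mul {F G : S2} {p q : Bool} (hF : HasParity F p) (hG : HasParity G q) (H : S2) :
    X F (mul G H) = mul (X F G) H + sgn (p && q) • mul G (X F H) := by
  simp only [X_eq_of_hasParity hF]
  cases p <;> cases q <;> obtain ⟨hF₁, hF₂⟩ := hF <;> obtain ⟨hG₁, hG₂⟩ := hG <;>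
    apply S2.ext <;>
    simp only [add_apply, sub_apply, smul_apply, mul_apply, eta1_apply, eta2_apply, dx_apply,
      hF₁, hF₂, hG₁, hG₂, Bool.false_and, Bool.and_false, Bool.true_and, sgn_false, sgn_true,
      sderiv_add, sderiv_sub, sderiv_mul, sderiv_zero, zero_mul, mul_zero, add_zero, zero_add,
      sub_zero, zero_sub, neg_zero, smul_zero] <;>
    · apply Subtype.ext; funext x
      simp only [Subalgebra.coe_add, Subalgebra.coe_mul, Subalgebra.coe_sub, Subalgebra.coe_neg,
        Subalgebra.coe_smul, Pi.add_apply, Pi.mul_apply, Pi.sub_apply, Pi.neg_apply,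
        Pi.smul_apply, smul_eq_mul, sderiv_coe]
      ring

theorem eta1_eta2_cbr {F G : S2} {p q : Bool} (hF : HasParity F p) (hG : HasParity G q) :
    eta1 (eta2 (cbr F G)) = X F (eta1 (eta2 G)) - sgn (q && p) • X G (eta1 (eta2 F)) := by
  simp only [cbr, X_eq_of_hasParity hF, X_eq_of_hasParity hG]
  cases p <;> cases q <;> obtain ⟨hF₁, hF₂⟩ := hF <;> obtain ⟨hG₁, hG₂⟩ := hG <;>
    apply S2.ext <;>
    simp only [add_apply, sub_apply, smul_apply, mul_apply, eta1_apply, eta2_apply, dx_apply,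
      hF₁, hF₂, hG₁, hG₂, Bool.false_and, Bool.and_false, Bool.true_and, sgn_false, sgn_true,
      sderiv_add, sderiv_sub, sderiv_neg, sderiv_mul, sderiv_smul, sderiv_zero, zero_mul,
      mul_zero, add_zero, zero_add, sub_zero, zero_sub, neg_zero, smul_zero] <;>
    · apply Subtype.ext; funext x
      simp only [Subalgebra.coe_add, Subalgebra.coe_mul, Subalgebra.coe_sub, Subalgebra.coe_neg,
        Subalgebra.coe_smul, Pi.add_apply, Pi.mul_apply, Pi.sub_apply, Pi.neg_apply,
        Pi.smul_apply, smul_eq_mul, sderiv_coe]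
      ring

theorem opAct_mul {F G : S2} {p q : Bool} (lam : ℝ) (hF : HasParity F p) (hG : HasParity G q) :
    opAct lam lam p q F (mul G) = mul (X F G) := by
  funext H
  simp only [opAct, Lact, X_mul hF hG, S2.mul_left_comm (hasParity_dx hF) hG, S2.mul_add,
    S2.mul_smul]
  cases p <;> cases q <;>
    simp only [Bool.false_and, Bool.and_false, Bool.true_and, sgn_false, sgn_true] <;> module

theorem isLinearMap_Ut0 : IsLinearMap ℝ Ut0 :=
  ⟨fun G G' => funext fun F => by simp only [Ut0, eta2_add, eta1_add, S2.add_mul]; rfl,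
    fun c G => funext fun F => by simp only [Ut0, eta2_smul, eta1_smul, S2.smul_mul]; rfl⟩

theorem diffValued_Ut0 : DiffValued Ut0 :=
  fun G _ => ⟨0, fun _ _ => eta1 (eta2 G), fun F => by simp [Ut0]⟩

theorem opParity_Ut0 {G : S2} {p : Bool} (hG : HasParity G p) : OpParity (Ut0 G) p :=
  fun _ _ hF => by
    simpa only [Ut0, Bool.not_not] using hasParity_mul (hasParity_eta1 (hasParity_eta2 hG)) hF

theorem isCocycle_Ut0 (lam : ℝ) : IsCocycle lam lam false Ut0 := by
  intro F G _ _ p q hF hG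
  have hφF : HasParity (eta1 (eta2 F)) p := by simpa using hasParity_eta1 (hasParity_eta2 hF)
  have hφG : HasParity (eta1 (eta2 G)) q := by simpa using hasParity_eta1 (hasParity_eta2 hG)
  have hUt0 : ∀ K, Ut0 K = mul (eta1 (eta2 K)) := fun _ => rfl
  simp only [hUt0, Bool.and_false, Bool.xor_false, Bool.false_xor, sgn_false, one_smul,
    opAct_mul lam hF hφG, opAct_mul lam hG hφF, eta1_eta2_cbr hF hG]
  funext H
  simp only [S2.sub_mul, S2.smul_mul]
  rfl

theorem IsDiffOp.map_zero {A : S2 → S2} (hA : IsDiffOp A) : A 0 = 0 := by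
  obtain ⟨N, a, ha⟩ := hA
  simp [ha, iterate_fixed eta1_zero, iterate_fixed eta2_zero, S2.mul_zero]

theorem Lact_fθ12_one (lam : ℝ) : Lact lam fθ12 one2 = 0 := by
  apply S2.ext <;> simp [Lact, X]

theorem Lact_fθ12_apply_zero (lam : ℝ) (G : S2) : Lact lam fθ12 G 0 = 0 := by
  simp [Lact, X]

theorem Ut0_fθ12 (F : S2) : Ut0 fθ12 F = -F := by
  apply S2.ext <;> simp [Ut0] <;> ring

theorem not_isCoboundaryAny_Ut0 (lam mu : ℝ) : ¬ IsCoboundaryAny lam mu Ut0 := by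
  rintro ⟨p, A, hA, -, hcob⟩
  have h := congr_fun (hcob fθ12 (Submodule.subset_span (by simp)) false ⟨rfl, rfl⟩) one2
  have h₀ := congr_arg (· 0) h
  simp [Ut0_fθ12, opAct, Lact_fθ12_one, hA.map_zero, Lact_fθ12_apply_zero] at h₀

end S2

open S2 in
/-- The even linear map `Υ̃_{0,0} : osp(2|2) → D²_{0,0}`, `Υ̃_{0,0}(X_G) : F ↦ η̄₁η̄₂(G)·F`,
is a `1`-cocycle and is not a coboundary. -/
theorem Ut0_isCocycle_not_coboundary :
    IsLinearMap ℝ (Ut0 : Cochain) ∧ DiffValued Ut0 ∧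
      (∀ G ∈ osp22, ∀ pG : Bool, HasParity G pG → OpParity (Ut0 G) pG) ∧
      IsCocycle 0 0 false Ut0 ∧ ¬ IsCoboundaryAny 0 0 Ut0 :=
  ⟨isLinearMap_Ut0, diffValued_Ut0, fun _ _ _ => opParity_Ut0, isCocycle_Ut0 0,
    not_isCoboundaryAny_Ut0 0 0⟩
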